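/- If the polynomial χ(X) = X³ - c₁X² - c₂X - c₃ is irreducible in F[X], then the only solution in F³ of the equation Q(x₁,x₂,x₃) = 0 is (0,0,0). -/

import Mathlib

/-- The group law `⊕` on `F³` (encoded as `F × F × F`). -/
def oplus {F : Type*} [CommRing F] (c₁ c₂ c₃ : F) (x y : F × F × F) : F × F × F :=
  ⟨x.1 * y.1 + c₃ * (x.2.1 * y.2.2 + x.2.2 * y.2.1) + c₁ * c₃ * (x.2.2 * y.2.2),
   x.1 * y.2.1 + x.2.1 * y.1 + c₂ * (x.2.1 * y.2.2 + x.2.2 * y.2.1)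
     + (c₁ * c₂ + c₃) * (x.2.2 * y.2.2),
   x.2.1 * y.2.1 + x.1 * y.2.2 + x.2.2 * y.1 + c₁ * (x.2.1 * y.2.2 + x.2.2 * y.2.1)
     + (c₁ ^ 2 + c₂) * (x.2.2 * y.2.2)⟩

/-- The cubic form `Q`. -/
def Qf {F : Type*} [CommRing F] (c₁ c₂ c₃ : F) (x : F × F × F) : F :=
  -c₂ * x.1 * x.2.1 ^ 2 + (c₂ ^ 2 - 2 * (c₁ * c₃)) * x.1 * x.2.2 ^ 2
    + c₁ * x.1 ^ 2 * x.2.1 + (c₁ ^ 2 + 2 * c₂) * x.1 ^ 2 * x.2.2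
    - (c₂ * c₃) * x.2.1 * x.2.2 ^ 2 + (c₁ * c₃) * x.2.1 ^ 2 * x.2.2
    - (c₁ * c₂ + 3 * c₃) * x.1 * x.2.1 * x.2.2
    + x.1 ^ 3 + c₃ * x.2.1 ^ 3 + c₃ ^ 2 * x.2.2 ^ 3

/-- `n`-fold `⊕`-power. -/
def opow {F : Type*} [CommRing F] (c₁ c₂ c₃ : F) : ℕ → F × F × F → F × F × F
  | 0, _ => (1, 0, 0)
  | n + 1, x => oplus c₁ c₂ c₃ x (opow c₁ c₂ c₃ n x)
/-!
Send `(x₁, x₂, x₃)` to `x₁ + x₂ α + x₃ α²` in `F[X]/(χ)`, where `α` is the class of `X`. Since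
`1, α, α²` is a basis, this is a bijection carrying `⊕` to multiplication, and `Q` is
multiplicative for `⊕` (it is the norm). When `χ` is irreducible the quotient is a field, so a
nonzero `x` has a `⊕`-inverse `y`, and then `Q x * Q y = Q (1, 0, 0) = 1` forces `Q x ≠ 0`.
-/

open Polynomial

theorem Qf_oplus {F : Type*} [CommRing F] (c₁ c₂ c₃ : F) (x y : F × F × F) :
    Qf c₁ c₂ c₃ (oplus c₁ c₂ c₃ x y) = Qf c₁ c₂ c₃ x * Qf c₁ c₂ c₃ y := by
  obtain ⟨a, b, c⟩ := x
  obtain ⟨d, e, g⟩ := y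
  simp only [Qf, oplus]
  ring

theorem Qf_one_zero_zero {F : Type*} [CommRing F] (c₁ c₂ c₃ : F) :
    Qf c₁ c₂ c₃ (1, 0, 0) = 1 := by
  simp [Qf]

section PowerCombination

variable {F A : Type*} [CommRing F] [CommRing A] [Algebra F A]

variable (F) in
def powerCombination (α : A) (x : F × F × F) : A := x.1 • 1 + x.2.1 • α + x.2.2 • α ^ 2

theorem powerCombination_zero (α : A) : powerCombination F α 0 = 0 := by
  simp [powerCombination]

theorem powerCombination_one_zero_zero (α : A) : powerCombination F α (1, 0, 0) = 1 := by
  simp [powerCombination]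

theorem powerCombination_oplus {c₁ c₂ c₃ : F} {α : A}
    (hα : aeval α (X ^ 3 - C c₁ * X ^ 2 - C c₂ * X - C c₃) = 0) (x y : F × F × F) :
    powerCombination F α (oplus c₁ c₂ c₃ x y) =
      powerCombination F α x * powerCombination F α y := by
  obtain ⟨a, b, c⟩ := x
  obtain ⟨d, e, g⟩ := y
  simp only [map_sub, map_mul, map_pow, aeval_X, aeval_C] at hα
  simp only [powerCombination, oplus, Algebra.smul_def, map_add, map_mul, map_pow]
  -- the product has an `α⁴ = α * α³` term besides the `α³` terms
  linear_combination (-(algebraMap F A b * algebraMap F A g) - algebraMap F A c * algebraMap F A e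
    - algebraMap F A c * algebraMap F A g * (α + algebraMap F A c₁)) * hα

theorem powerCombination_eq_basis_equivFun_symm {α : A} (b : Module.Basis (Fin 3) F A)
    (hb : ∀ i, b i = α ^ (i : ℕ)) (x : F × F × F) :
    powerCombination F α x = b.equivFun.symm ![x.1, x.2.1, x.2.2] := by
  simp [powerCombination, Module.Basis.equivFun_symm_apply, Fin.sum_univ_three, hb]

theorem bijective_powerCombination (pb : PowerBasis F A) (hdim : pb.dim = 3) :
    Function.Bijective (powerCombination F pb.gen) := by
  set b := pb.basis.reindex (finCongr hdim)
  have hb : ∀ i, b i = pb.gen ^ (i : ℕ) := by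
    intro i
    simp [b, Module.Basis.reindex_apply, PowerBasis.coe_basis]
  simp only [funext (powerCombination_eq_basis_equivFun_symm b hb)]
  constructor
  · intro x y hxy
    have hcoord := congrFun (b.equivFun.symm.injective hxy)
    exact Prod.ext (hcoord 0) (Prod.ext (hcoord 1) (hcoord 2))
  · intro z
    refine ⟨(b.repr z 0, b.repr z 1, b.repr z 2), ?_⟩
    convert b.equivFun.symm_apply_apply z
    ext i
    fin_cases i <;> rfl

end PowerCombination

theorem eq_zero_of_Qf_eq_zero {F A : Type*} [CommRing F] [Nontrivial F] [Field A] [Algebra F A]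
    {c₁ c₂ c₃ : F} {α : A} (hα : aeval α (X ^ 3 - C c₁ * X ^ 2 - C c₂ * X - C c₃) = 0)
    (hbij : Function.Bijective (powerCombination F α)) {x : F × F × F}
    (hQ : Qf c₁ c₂ c₃ x = 0) : x = (0, 0, 0) := by
  by_contra hx
  have hx' : powerCombination F α x ≠ 0 := by
    rw [← powerCombination_zero (F := F) α]
    exact hbij.1.ne hx
  obtain ⟨y, hy⟩ := hbij.2 (powerCombination F α x)⁻¹
  have hxy : oplus c₁ c₂ c₃ x y = (1, 0, 0) := hbij.1 <| by
    rw [powerCombination_oplus hα, hy, mul_inv_cancel₀ hx', powerCombination_one_zero_zero]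
  have hQxy := Qf_oplus c₁ c₂ c₃ x y
  rw [hxy, Qf_one_zero_zero, hQ, zero_mul] at hQxy
  exact one_ne_zero hQxy

open Polynomial in
theorem stmt13 {F : Type*} [Field F] (c₁ c₂ c₃ : F)
    (hirr : Irreducible (X ^ 3 - C c₁ * X ^ 2 - C c₂ * X - C c₃)) :
    ∀ x : F × F × F, Qf c₁ c₂ c₃ x = 0 → x = (0, 0, 0) := by
  intro x hQ
  set χ : F[X] := X ^ 3 - C c₁ * X ^ 2 - C c₂ * X - C c₃ with hχ
  have hmon : χ.Monic := by rw [hχ]; monicity!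
  have hdeg : χ.natDegree = 3 := by rw [hχ]; compute_degree!
  have := Fact.mk hirr
  have hα : aeval (AdjoinRoot.root χ) χ = 0 := (AdjoinRoot.aeval_eq χ).trans AdjoinRoot.mk_self
  exact eq_zero_of_Qf_eq_zero hα (bijective_powerCombination (AdjoinRoot.powerBasis' hmon) hdeg) hQ
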